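/- arXiv:2512.17244 — 2 statements merged into one kernel-verified Lean document; each statement's English description precedes it below -/
import Mathlib

section
/- With the notation of the doubling construction, suppose in addition that Δ is connected and not bipartite, and that X has a unique minimal normal subgroup N_0, with N_0 nonabelian. Then G = ⟨X × X, t⟩ has a unique minimal normal subgroup, namely L = N_0 × N_0 ≤ X × X. If moreover every nontrivial normal subgroup of X is transitive on VΔ (i.e. X is quasiprimitive on VΔ), then G is bi-quasiprimitive on VΓ and Γ is a connected (G,2s)-arc-transitive digraph. -/
namespace Doubling

variable {W : Type*}

/-- The arc set of a digraph is asymmetric (in particular loopless). -/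
def IsDigraph {α : Type*} (B : α → α → Prop) : Prop := ∀ u v : α, B u v → ¬ B v u

/-- Connectivity of the underlying undirected graph. -/
def Connected {α : Type*} (B : α → α → Prop) : Prop :=
  ∀ u v : α, Relation.ReflTransGen (fun a b => B a b ∨ B b a) u v

/-- The underlying undirected graph is bipartite. -/
def Bipartite {α : Type*} (B : α → α → Prop) : Prop :=
  ∃ S : Set α, ∀ u v : α, B u v → (u ∈ S ↔ v ∉ S)

/-- `G` consists of automorphisms of the digraph with arc set `B`. -/
def PreservesArcs {α : Type*} (B : α → α → Prop) (G : Subgroup (Equiv.Perm α)) : Prop :=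
  ∀ g ∈ G, ∀ u v : α, B u v → B (g u) (g v)

/-- `G` is transitive on vertices. -/
def VertexTransitive {α : Type*} (G : Subgroup (Equiv.Perm α)) : Prop :=
  ∀ u v : α, ∃ g ∈ G, g u = v

/-- `p` is an `s`-arc of the digraph with arc set `B`. -/
def IsArcSeq {α : Type*} (B : α → α → Prop) (s : ℕ) (p : Fin (s + 1) → α) : Prop :=
  ∀ i : Fin s, B (p i.castSucc) (p i.succ)

/-- `G` is transitive on the `s`-arcs of the digraph with arc set `B`. -/
def ArcTransitive {α : Type*} (B : α → α → Prop) (G : Subgroup (Equiv.Perm α)) (s : ℕ) : Prop :=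
  ∀ p q : Fin (s + 1) → α, IsArcSeq B s p → IsArcSeq B s q →
    ∃ g ∈ G, ∀ i : Fin (s + 1), g (p i) = q i

/-- Every vertex of the digraph with arc set `B` has out-valency and in-valency `k`. -/
def Valency {α : Type*} (B : α → α → Prop) (k : ℕ) : Prop :=
  ∀ v : α, {w : α | B v w}.ncard = k ∧ {w : α | B w v}.ncard = k

/-- The arc set of the doubling digraph `Γ` on `VΔ × VΔ × Z₂`:
`(v,w,0) → (v',w',1)` iff `v' = v` and `(w,w') ∈ AΔ`, and
`(v,w,1) → (v',w',0)` iff `(v,v') ∈ AΔ` and `w' = w`. -/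
def doubleArc (B : W → W → Prop) :
    W × W × ZMod 2 → W × W × ZMod 2 → Prop :=
  fun u u' =>
    (u.2.2 = 0 ∧ u'.2.2 = 1 ∧ u'.1 = u.1 ∧ B u.2.1 u'.2.1) ∨
    (u.2.2 = 1 ∧ u'.2.2 = 0 ∧ B u.1 u'.1 ∧ u.2.1 = u'.2.1)

/-- The permutation `(x,y) : (v,w,δ) ↦ (v^x, w^y, δ)` of `VΔ × VΔ × Z₂`. -/
def pairPerm (x y : Equiv.Perm W) : Equiv.Perm (W × W × ZMod 2) :=
  Equiv.prodCongr x (Equiv.prodCongr y (Equiv.refl (ZMod 2)))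

/-- The embedding of `Sym(VΔ) × Sym(VΔ)` into `Sym(VΔ × VΔ × Z₂)`. -/
def pairHom : Equiv.Perm W × Equiv.Perm W →* Equiv.Perm (W × W × ZMod 2) where
  toFun p := pairPerm p.1 p.2
  map_one' := by
    ext u <;> simp [pairPerm]
  map_mul' a b := by
    ext u <;> simp [pairPerm]

/-- The permutation `τ : (v,w,δ) ↦ (w,v,δ+1)` of `VΔ × VΔ × Z₂`. -/
def tauPerm : Equiv.Perm (W × W × ZMod 2) where
  toFun u := (u.2.1, u.1, u.2.2 + 1)
  invFun u := (u.2.1, u.1, u.2.2 + 1)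
  left_inv := by
    have h : ∀ z : ZMod 2, z + 1 + 1 = z := by decide
    intro u
    simp [h]
  right_inv := by
    have h : ∀ z : ZMod 2, z + 1 + 1 = z := by decide
    intro u
    simp [h]

/-- The permutation `t = (g,1)τ : (v,w,δ) ↦ (w, v^g, δ+1)`. -/
def tPerm (g : Equiv.Perm W) : Equiv.Perm (W × W × ZMod 2) :=
  tauPerm * pairPerm g 1

/-- The group `G⁺ = X × X` acting coordinatewise on `VΔ × VΔ × Z₂`. -/
def doubleGroupPlus (X : Subgroup (Equiv.Perm W)) : Subgroup (Equiv.Perm (W × W × ZMod 2)) :=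
  Subgroup.map pairHom (X.prod X)

/-- The group `G = ⟨G⁺, t⟩`. -/
def doubleGroup (X : Subgroup (Equiv.Perm W)) (g : Equiv.Perm W) :
    Subgroup (Equiv.Perm (W × W × ZMod 2)) :=
  doubleGroupPlus X ⊔ Subgroup.closure {tPerm g}

/-- `N` is a subgroup of `G` which is normal in `G`. -/
def NormalIn {α : Type*} (N G : Subgroup (Equiv.Perm α)) : Prop :=
  N ≤ G ∧ ∀ g ∈ G, ∀ x ∈ N, g * x * g⁻¹ ∈ N

/-- `L` is a minimal normal subgroup of `G`. -/
def MinimalNormalIn {α : Type*} (L G : Subgroup (Equiv.Perm α)) : Prop :=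
  NormalIn L G ∧ L ≠ ⊥ ∧
    ∀ L' : Subgroup (Equiv.Perm α), NormalIn L' G → L' ≠ ⊥ → L' ≤ L → L' = L

/-- `G` is bi-quasiprimitive on `α`: every nontrivial normal subgroup has at most two
orbits, and some normal subgroup has exactly two orbits. -/
def BiQuasiprimitive {α : Type*} (G : Subgroup (Equiv.Perm α)) : Prop :=
  (∀ L : Subgroup (Equiv.Perm α), NormalIn L G → L ≠ ⊥ →
    Nat.card (Quotient (MulAction.orbitRel L α)) ≤ 2) ∧
  (∃ L : Subgroup (Equiv.Perm α), NormalIn L G ∧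
    Nat.card (Quotient (MulAction.orbitRel L α)) = 2)

/-!
Write `L = N₀ × N₀`. If `1 ≠ K ≤ L` is normal in `G`, the first projection of `K` is a nontrivial
normal subgroup of `X` inside `N₀` (conjugation by `t` swaps the factors), hence equals `N₀`;
commutators of `K` with `N₀ × 1` then make `K ∩ (N₀ × 1)` nontrivial, so `N₀ × 1 ≤ K`, and
conjugating by `t` gives `1 × N₀ ≤ K`. As `N₀` is nonabelian and the unique minimal normal
subgroup of `X`, its centralizer in `X` is trivial; hence so is the centralizer of `L` in
`G = G⁺ ∪ G⁺t` (elements of `G⁺t` swap the factors), and a minimal normal subgroup with trivial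
centralizer is the only one.

If `N₀` is transitive, the `L`-orbits are the two parts of `Γ`, which gives bi-quasiprimitivity.
A pair of `s`-arcs `(vᵢ)`, `(wᵢ)` of `Δ` zigzags to the `2s`-arc
`(v₀, w₀, 0), (v₀, w₁, 1), (v₁, w₁, 0), …` of `Γ`, and every `2s`-arc starting in `Γ₀` arises
so; thus `X × X` is transitive on these, and `t` moves `Γ₁` to `Γ₀`.

For connectivity, let `≡` (`AltRel`) be the least equivalence relation on `VΔ` such that
`u ≡ u'` implies `v ≡ v'` for all arcs `u → v`, `u' → v'`; walks in `Γ` join `(v, w, 0)` to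
`(v', w, 0)` whenever `v ≡ v'`. The arcs induce a permutation `e` of the `≡`-classes commuting
with `X`, and since `Δ` is connected every element of `X` keeps each class in its `e`-cycle, so
`X` acts on the classes as an abelian group. The kernel of this action contains the commutators,
so it is nontrivial and, by quasiprimitivity, transitive: `≡` is universal. The reversed digraph
handles the second coordinate.
-/
section PermutationGroups

variable {α : Type*}

lemma connected_iff_eqvGen {D : α → α → Prop} :
    Connected D ↔ ∀ u v, Relation.EqvGen D u v := by
  simp only [Connected, ← Relation.EqvGen.reflTransGen_symmGen]
  rfl

lemma Valency.exists_arc {D : α → α → Prop} {k : ℕ} (hD : Valency D k) (hk : k ≠ 0) (v : α) :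
    (∃ w, D v w) ∧ ∃ w, D w v :=
  ⟨Set.nonempty_of_ncard_ne_zero ((hD v).1 ▸ hk), Set.nonempty_of_ncard_ne_zero ((hD v).2 ▸ hk)⟩

lemma ne_bot_of_mem_of_ne_one {H : Subgroup (Equiv.Perm α)} {x : Equiv.Perm α} (hx : x ∈ H)
    (hx1 : x ≠ 1) : H ≠ ⊥ :=
  fun h => hx1 (Subgroup.mem_bot.mp (h ▸ hx))

lemma NormalIn.inf {M N G : Subgroup (Equiv.Perm α)} (hM : NormalIn M G) (hN : NormalIn N G) :
    NormalIn (M ⊓ N) G :=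
  ⟨inf_le_left.trans hM.1, fun g hg x hx => ⟨hM.2 g hg x hx.1, hN.2 g hg x hx.2⟩⟩

lemma NormalIn.of_le_normalizer {L G : Subgroup (Equiv.Perm α)} (hLG : L ≤ G)
    (hG : G ≤ Subgroup.normalizer (L : Set (Equiv.Perm α))) : NormalIn L G :=
  ⟨hLG, fun _ hg x hx => (Subgroup.mem_normalizer_iff.mp (hG hg) x).mp hx⟩

lemma NormalIn.commutator_mem_inf {M L G : Subgroup (Equiv.Perm α)} (hM : NormalIn M G)
    (hL : NormalIn L G) {m z : Equiv.Perm α} (hm : m ∈ M) (hz : z ∈ L) :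
    m * z * m⁻¹ * z⁻¹ ∈ M ⊓ L :=
  Subgroup.mem_inf.mpr
    ⟨by simpa only [mul_assoc] using M.mul_mem hm (hM.2 z (hL.1 hz) m⁻¹ (M.inv_mem hm)),
      L.mul_mem (hL.2 m (hM.1 hm) z hz) (L.inv_mem hz)⟩

lemma NormalIn.inf_centralizer {N X : Subgroup (Equiv.Perm α)} (hN : NormalIn N X) :
    NormalIn (X ⊓ Subgroup.centralizer N) X := by
  refine ⟨inf_le_left, fun y hy x hx =>
    Subgroup.mem_inf.mpr ⟨X.mul_mem (X.mul_mem hy hx.1) (X.inv_mem hy), ?_⟩⟩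
  refine Subgroup.mem_centralizer_iff.mpr fun a ha => ?_
  have hxa := Subgroup.mem_centralizer_iff.mp hx.2 _ (hN.2 y⁻¹ (X.inv_mem hy) a ha)
  rw [inv_inv] at hxa
  calc a * (y * x * y⁻¹) = y * (y⁻¹ * a * y * x) * y⁻¹ := by group
    _ = y * (x * (y⁻¹ * a * y)) * y⁻¹ := by rw [hxa]
    _ = y * x * y⁻¹ * a := by group

lemma exists_minimalNormalIn_le [Finite α] {G P : Subgroup (Equiv.Perm α)} (hP : NormalIn P G)
    (hP1 : P ≠ ⊥) : ∃ M, MinimalNormalIn M G ∧ M ≤ P := by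
  obtain ⟨M, ⟨hM, hM1, hMP⟩, hmin⟩ := WellFounded.has_min wellFounded_lt
    {M | NormalIn M G ∧ M ≠ ⊥ ∧ M ≤ P} ⟨P, hP, hP1, le_rfl⟩
  refine ⟨M, ⟨hM, hM1, fun L hL hL1 hLM => ?_⟩, hMP⟩
  by_contra hne
  exact hmin L ⟨hL, hL1, hLM.trans hMP⟩ (lt_of_le_of_ne hLM hne)

lemma MinimalNormalIn.eq_of_inf_centralizer_eq_bot {L G : Subgroup (Equiv.Perm α)}
    (hL : MinimalNormalIn L G) (hC : G ⊓ Subgroup.centralizer L = ⊥) {M : Subgroup (Equiv.Perm α)}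
    (hM : MinimalNormalIn M G) : M = L := by
  by_cases hML : M ⊓ L = ⊥
  · refine absurd ((Subgroup.eq_bot_iff_forall M).mpr fun m hm => ?_) hM.2.1
    rw [← Subgroup.mem_bot, ← hC]
    refine ⟨hM.1.1 hm, Subgroup.mem_centralizer_iff.mpr fun z hz => ?_⟩
    have h := hM.1.commutator_mem_inf hL.1 hm hz
    rw [hML, Subgroup.mem_bot, mul_inv_eq_one, mul_inv_eq_iff_eq_mul] at h
    exact h.symm
  · have hMle : M ≤ L := (hM.2.2 _ (hM.1.inf hL.1) hML inf_le_left) ▸ inf_le_right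
    exact hL.2.2 M hM.1 hM.2.1 hMle

lemma inf_centralizer_eq_bot [Finite α] {X N : Subgroup (Equiv.Perm α)} (hN : MinimalNormalIn N X)
    (huniq : ∀ L, MinimalNormalIn L X → L = N)
    (hnonab : ¬ ∀ a ∈ N, ∀ b ∈ N, a * b = b * a) : X ⊓ Subgroup.centralizer N = ⊥ := by
  by_contra hC
  obtain ⟨M, hM, hMC⟩ := exists_minimalNormalIn_le hN.1.inf_centralizer hC
  rw [huniq M hM] at hMC
  exact hnonab fun a ha b hb => Subgroup.mem_centralizer_iff.mp (hMC hb).2 a ha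

lemma card_orbitRel_le_of_le [Finite α] {M N : Subgroup (Equiv.Perm α)} (hMN : M ≤ N) :
    Nat.card (Quotient (MulAction.orbitRel N α)) ≤ Nat.card (Quotient (MulAction.orbitRel M α)) :=
  Nat.card_le_card_of_surjective
    (Quotient.map id fun _ _ ⟨m, hm⟩ => ⟨⟨m, hMN m.2⟩, hm⟩)
    (Quotient.ind fun u => ⟨⟦u⟧, rfl⟩)

lemma biQuasiprimitive_of_forall_minimalNormalIn_eq [Finite α] {G L : Subgroup (Equiv.Perm α)}
    (hL : NormalIn L G) (huniq : ∀ M, MinimalNormalIn M G → M = L)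
    (h2 : Nat.card (Quotient (MulAction.orbitRel L α)) = 2) : BiQuasiprimitive G := by
  refine ⟨fun N hN hN1 => ?_, L, hL, h2⟩
  obtain ⟨M, hM, hMN⟩ := exists_minimalNormalIn_le hN hN1
  exact h2 ▸ card_orbitRel_le_of_le (huniq M hM ▸ hMN)

end PermutationGroups

lemma mem_or_mul_inv_mem_of_mem_sup_closure {G : Type*} [Group G] {H : Subgroup G} {t : G}
    (hH : ∀ h ∈ H, t * h * t⁻¹ ∈ H) (ht : t * t ∈ H) {x : G}
    (hx : x ∈ H ⊔ Subgroup.closure {t}) : x ∈ H ∨ x * t⁻¹ ∈ H := by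
  rw [← Subgroup.closure_eq H, ← Subgroup.closure_union] at hx
  induction hx using Subgroup.closure_induction with
  | mem x hx =>
    rcases hx with hx | rfl
    · exact .inl (by simpa using hx)
    · exact .inr (by simp [H.one_mem])
  | one => exact .inl H.one_mem
  | mul x y _ _ hx hy =>
    rcases hx with hx | hx <;> rcases hy with hy | hy
    · exact .inl (H.mul_mem hx hy)
    · exact .inr (by convert H.mul_mem hx hy using 1; group)
    · exact .inr (by convert H.mul_mem hx (hH y hy) using 1; group)
    · exact .inl (by convert H.mul_mem (H.mul_mem hx (hH _ hy)) ht using 1; group)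
  | inv x _ hx =>
    rcases hx with hx | hx
    · exact .inl (H.inv_mem hx)
    · exact .inr (by convert H.inv_mem (H.mul_mem (hH _ hx) ht) using 1; group)

@[simp] lemma pairHom_apply (p : Equiv.Perm W × Equiv.Perm W) (u : W × W × ZMod 2) :
    pairHom p u = (p.1 u.1, p.2 u.2.1, u.2.2) := rfl

@[simp] lemma tPerm_apply (g : Equiv.Perm W) (u : W × W × ZMod 2) :
    tPerm g u = (u.2.1, g u.1, u.2.2 + 1) := rfl

lemma pairHom_injective : Function.Injective (pairHom (W := W)) := by
  intro p q h
  ext w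
  · simpa using congrArg (fun e => (e (w, w, 0)).1) h
  · simpa using congrArg (fun e => (e (w, w, 0)).2.1) h

lemma pairHom_inj {a b c d : Equiv.Perm W} : pairHom (a, b) = pairHom (c, d) ↔ a = c ∧ b = d :=
  pairHom_injective.eq_iff.trans Prod.mk_inj

lemma pairHom_mem_map_prod {A C : Subgroup (Equiv.Perm W)} {a c : Equiv.Perm W} :
    pairHom (a, c) ∈ Subgroup.map pairHom (A.prod C) ↔ a ∈ A ∧ c ∈ C :=
  (Subgroup.mem_map_iff_mem pairHom_injective).trans Subgroup.mem_prod

lemma pairHom_mul_pairHom (a b c d : Equiv.Perm W) :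
    pairHom (a, b) * pairHom (c, d) = pairHom (a * c, b * d) :=
  (map_mul pairHom (a, b) (c, d)).symm

lemma pairHom_conj (x y a b : Equiv.Perm W) :
    pairHom (x, y) * pairHom (a, b) * (pairHom (x, y))⁻¹ = pairHom (x * a * x⁻¹, y * b * y⁻¹) := by
  rw [← map_inv, ← map_mul, ← map_mul]
  rfl

lemma tPerm_conj (g a b : Equiv.Perm W) :
    tPerm g * pairHom (a, b) * (tPerm g)⁻¹ = pairHom (b, g * a * g⁻¹) := by
  rw [mul_inv_eq_iff_eq_mul]
  ext u <;> simp

lemma tPerm_mul_self (g : Equiv.Perm W) : tPerm g * tPerm g = pairHom (g, g) := by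
  ext u <;> simp [add_assoc, show (1 + 1 : ZMod 2) = 0 from rfl]

section DoubleGroup

variable {X : Subgroup (Equiv.Perm W)} {g : Equiv.Perm W}

lemma pairHom_mem_doubleGroup {x y : Equiv.Perm W} (hx : x ∈ X) (hy : y ∈ X) :
    pairHom (x, y) ∈ doubleGroup X g :=
  Subgroup.mem_sup_left (pairHom_mem_map_prod.mpr ⟨hx, hy⟩)

lemma tPerm_mem_doubleGroup : tPerm g ∈ doubleGroup X g :=
  Subgroup.mem_sup_right (Subgroup.subset_closure rfl)

lemma doubleGroup_cases (hg : g ∈ X) {h : Equiv.Perm (W × W × ZMod 2)}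
    (hh : h ∈ doubleGroup X g) :
    h ∈ doubleGroupPlus X ∨ h * (tPerm g)⁻¹ ∈ doubleGroupPlus X := by
  refine mem_or_mul_inv_mem_of_mem_sup_closure ?_ ?_ hh
  · rintro _ ⟨⟨x, y⟩, ⟨hx, hy⟩, rfl⟩
    rw [tPerm_conj]
    exact pairHom_mem_map_prod.mpr ⟨hy, X.mul_mem (X.mul_mem hg hx) (X.inv_mem hg)⟩
  · rw [tPerm_mul_self]
    exact pairHom_mem_map_prod.mpr ⟨hg, hg⟩

end DoubleGroup

section Socle

variable {X N₀ : Subgroup (Equiv.Perm W)} {g : Equiv.Perm W}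

lemma normalIn_socle [Finite W] (hg : g ∈ X) (hN : NormalIn N₀ X) :
    NormalIn (Subgroup.map pairHom (N₀.prod N₀)) (doubleGroup X g) := by
  refine .of_le_normalizer ((Subgroup.map_mono (Subgroup.prod_mono hN.1 hN.1)).trans le_sup_left)
    (sup_le (fun h hh => Subgroup.mem_normalizer_fintype ?_) ?_)
  · obtain ⟨⟨x, y⟩, ⟨hx, hy⟩, rfl⟩ := hh
    rintro _ ⟨⟨a, b⟩, ⟨ha, hb⟩, rfl⟩
    rw [pairHom_conj]
    exact pairHom_mem_map_prod.mpr ⟨hN.2 x hx a ha, hN.2 y hy b hb⟩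
  · rw [Subgroup.closure_le, Set.singleton_subset_iff]
    refine Subgroup.mem_normalizer_fintype ?_
    rintro _ ⟨⟨a, b⟩, ⟨ha, hb⟩, rfl⟩
    rw [tPerm_conj]
    exact pairHom_mem_map_prod.mpr ⟨hb, hN.2 g hg a ha⟩

variable {K : Subgroup (Equiv.Perm (W × W × ZMod 2))}

lemma NormalIn.pairHom_conj_mem (hK : NormalIn K (doubleGroup X g)) {x y a b : Equiv.Perm W}
    (hx : x ∈ X) (hy : y ∈ X) (hab : pairHom (a, b) ∈ K) :
    pairHom (x * a * x⁻¹, y * b * y⁻¹) ∈ K :=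
  pairHom_conj x y a b ▸ hK.2 _ (pairHom_mem_doubleGroup hx hy) _ hab

lemma NormalIn.pairHom_swap_mem (hK : NormalIn K (doubleGroup X g)) {a b : Equiv.Perm W}
    (hab : pairHom (a, b) ∈ K) : pairHom (b, g * a * g⁻¹) ∈ K :=
  tPerm_conj g a b ▸ hK.2 _ tPerm_mem_doubleGroup _ hab

lemma exists_pairHom_mem (hmin : MinimalNormalIn N₀ X) (hK : NormalIn K (doubleGroup X g))
    (hKL : K ≤ Subgroup.map pairHom (N₀.prod N₀)) (hK1 : K ≠ ⊥) {a : Equiv.Perm W} (ha : a ∈ N₀) :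
    ∃ b, pairHom (a, b) ∈ K := by
  let P := (K.comap pairHom).map (MonoidHom.fst _ _)
  have hPN : P ≤ N₀ := by
    rintro _ ⟨⟨c, d⟩, hcd, rfl⟩
    exact (pairHom_mem_map_prod.mp (hKL hcd)).1
  have hPX : NormalIn P X := by
    refine ⟨hPN.trans hmin.1.1, ?_⟩
    rintro x hx _ ⟨⟨c, d⟩, hcd, rfl⟩
    exact ⟨(x * c * x⁻¹, 1 * d * 1⁻¹), hK.pairHom_conj_mem hx X.one_mem hcd, rfl⟩
  have hP1 : P ≠ ⊥ := by
    obtain ⟨_, hk, hk1⟩ := K.bot_or_exists_ne_one.resolve_left hK1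
    obtain ⟨⟨c, d⟩, -, rfl⟩ := hKL hk
    by_cases hc : c = 1
    · subst hc
      have hd : d ≠ 1 := fun hd => hk1 (by rw [hd]; exact map_one _)
      refine ne_bot_of_mem_of_ne_one ⟨(d, g * 1 * g⁻¹), hK.pairHom_swap_mem hk, rfl⟩ hd
    · exact ne_bot_of_mem_of_ne_one ⟨(c, d), hk, rfl⟩ hc
  obtain ⟨⟨_, b⟩, hab, rfl⟩ := (hmin.2.2 P hPX hP1 hPN).symm ▸ ha
  exact ⟨b, hab⟩

lemma pairHom_left_mem (hmin : MinimalNormalIn N₀ X) (hK : NormalIn K (doubleGroup X g))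
    (hKL : K ≤ Subgroup.map pairHom (N₀.prod N₀)) (hK1 : K ≠ ⊥)
    (hnonab : ¬ ∀ a ∈ N₀, ∀ b ∈ N₀, a * b = b * a) {a : Equiv.Perm W} (ha : a ∈ N₀) :
    pairHom (a, 1) ∈ K := by
  let P := K.comap (pairHom.comp (MonoidHom.inl _ _))
  have hPN : P ≤ N₀ := fun c hc => (pairHom_mem_map_prod.mp (hKL hc)).1
  have hPX : NormalIn P X := by
    refine ⟨hPN.trans hmin.1.1, fun x hx c hc => ?_⟩
    show pairHom (x * c * x⁻¹, 1) ∈ K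
    simpa using hK.pairHom_conj_mem hx X.one_mem hc
  have hP1 : P ≠ ⊥ := by
    simp only [not_forall] at hnonab
    obtain ⟨n, hn, c, hc, hnc⟩ := hnonab
    obtain ⟨d, hcd⟩ := exists_pairHom_mem hmin hK hKL hK1 hc
    have hmem : pairHom (n * c * n⁻¹ * c⁻¹, 1) ∈ K := by
      have := K.mul_mem (hK.pairHom_conj_mem (hmin.1.1 hn) X.one_mem hcd) (K.inv_mem hcd)
      rwa [← map_inv, Prod.inv_mk, pairHom_mul_pairHom, one_mul, inv_one, mul_one,
        mul_inv_cancel] at this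
    refine ne_bot_of_mem_of_ne_one (x := n * c * n⁻¹ * c⁻¹) hmem fun h1 => hnc ?_
    rwa [mul_inv_eq_one, mul_inv_eq_iff_eq_mul] at h1
  rw [← hmin.2.2 P hPX hP1 hPN] at ha
  exact ha

lemma minimalNormalIn_socle [Finite W] (hg : g ∈ X) (hmin : MinimalNormalIn N₀ X)
    (hnonab : ¬ ∀ a ∈ N₀, ∀ b ∈ N₀, a * b = b * a) :
    MinimalNormalIn (Subgroup.map pairHom (N₀.prod N₀)) (doubleGroup X g) := by
  refine ⟨normalIn_socle hg hmin.1, ?_, fun K hK hK1 hKL => le_antisymm hKL ?_⟩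
  · obtain ⟨a, ha, ha1⟩ := N₀.bot_or_exists_ne_one.resolve_left hmin.2.1
    exact ne_bot_of_mem_of_ne_one (pairHom_mem_map_prod.mpr ⟨ha, N₀.one_mem⟩)
      fun h => ha1 (pairHom_inj.mp (h.trans (map_one _).symm)).1
  rintro _ ⟨⟨a, b⟩, ⟨ha, hb⟩, rfl⟩
  have hleft : ∀ c ∈ N₀, pairHom (c, 1) ∈ K := fun c hc =>
    pairHom_left_mem hmin hK hKL hK1 hnonab hc
  have hright : pairHom (1, b) ∈ K := by
    simpa [mul_assoc] using hK.pairHom_swap_mem (hleft _ (hmin.1.2 g⁻¹ (X.inv_mem hg) b hb))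
  simpa [pairHom_mul_pairHom] using K.mul_mem (hleft a ha) hright

lemma doubleGroup_inf_centralizer_socle (hg : g ∈ X) (hN1 : N₀ ≠ ⊥)
    (hC : X ⊓ Subgroup.centralizer N₀ = ⊥) :
    doubleGroup X g ⊓ Subgroup.centralizer (Subgroup.map pairHom (N₀.prod N₀)) = ⊥ := by
  refine (Subgroup.eq_bot_iff_forall _).mpr fun m ⟨hm, hmC⟩ => ?_
  have hcomm : ∀ a ∈ N₀, ∀ b ∈ N₀, pairHom (a, b) * m = m * pairHom (a, b) := fun a ha b hb =>
    Subgroup.mem_centralizer_iff.mp hmC _ (pairHom_mem_map_prod.mpr ⟨ha, hb⟩)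
  have hX : ∀ x ∈ X, (∀ a ∈ N₀, a * x = x * a) → x = 1 := fun x hx hxa =>
    Subgroup.mem_bot.mp (hC ▸ Subgroup.mem_inf.mpr ⟨hx, Subgroup.mem_centralizer_iff.mpr hxa⟩)
  rcases doubleGroup_cases hg hm with ⟨⟨x, y⟩, ⟨hx, hy⟩, rfl⟩ | ⟨⟨x, y⟩, ⟨hx, hy⟩, hxy⟩
  · have hx1 : x = 1 := hX x hx fun a ha => by
      simpa [pairHom_mul_pairHom, pairHom_inj] using hcomm a ha 1 N₀.one_mem
    have hy1 : y = 1 := hX y hy fun b hb => by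
      simpa [pairHom_mul_pairHom, pairHom_inj] using hcomm 1 N₀.one_mem b hb
    rw [hx1, hy1]
    exact map_one pairHom
  · -- an element of the coset `G⁺ t` swaps the two factors of `N₀ × N₀`
    obtain ⟨a, ha, ha1⟩ := N₀.bot_or_exists_ne_one.resolve_left hN1
    obtain rfl : m = pairHom (x, y) * tPerm g := (eq_mul_inv_iff_mul_eq.mp hxy).symm
    have h := mul_inv_eq_of_eq_mul (hcomm a ha 1 N₀.one_mem).symm
    rw [show ∀ p q r : Equiv.Perm (W × W × ZMod 2),
        p * q * r * (p * q)⁻¹ = p * (q * r * q⁻¹) * p⁻¹ by intros; group,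
      tPerm_conj, pairHom_conj] at h
    exact absurd (by simpa using (pairHom_inj.mp h.symm).1) ha1

lemma card_orbitRel_socle [Nonempty W] (htrans : ∀ u v : W, ∃ x ∈ N₀, x u = v) :
    Nat.card (Quotient (MulAction.orbitRel (Subgroup.map pairHom (N₀.prod N₀))
      (W × W × ZMod 2))) = 2 := by
  have horbit : ∀ u v : W × W × ZMod 2,
      MulAction.orbitRel (Subgroup.map pairHom (N₀.prod N₀)) _ u v ↔ u.2.2 = v.2.2 := by
    refine fun u v => ⟨?_, fun huv => ?_⟩
    · rintro ⟨⟨_, ⟨p, -, rfl⟩⟩, rfl⟩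
      rfl
    · obtain ⟨x, hx, hxv⟩ := htrans v.1 u.1
      obtain ⟨y, hy, hyv⟩ := htrans v.2.1 u.2.1
      exact ⟨⟨pairHom (x, y), pairHom_mem_map_prod.mpr ⟨hx, hy⟩⟩, by simp [hxv, hyv, ← huv]⟩
  have hsurj : Function.Surjective fun u : W × W × ZMod 2 => u.2.2 :=
    fun δ => ⟨(Classical.arbitrary W, Classical.arbitrary W, δ), rfl⟩
  rw [Nat.card_congr ((Quotient.congrRight horbit).trans
    (Setoid.quotientKerEquivOfSurjective _ hsurj)), Nat.card_zmod]

end Socle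

section ArcAutomorphisms

variable {α : Type*}

def arcAut (D : α → α → Prop) : Subgroup (Equiv.Perm α) where
  carrier := {σ | ∀ u v, D (σ u) (σ v) ↔ D u v}
  one_mem' _ _ := Iff.rfl
  mul_mem' hσ hτ u v := (hσ _ _).trans (hτ u v)
  inv_mem' {σ} hσ u v := by simpa using (hσ (σ⁻¹ u) (σ⁻¹ v)).symm

lemma PreservesArcs.le_arcAut {D : α → α → Prop} {X : Subgroup (Equiv.Perm α)}
    (hX : PreservesArcs D X) : X ≤ arcAut D :=
  fun x hx u v => ⟨fun h => by simpa using hX x⁻¹ (X.inv_mem hx) _ _ h, hX x hx u v⟩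

lemma arcAut_flip (D : α → α → Prop) : arcAut (flip D) = arcAut D := by
  ext σ
  exact ⟨fun h u v => h v u, fun h u v => h v u⟩

lemma IsArcSeq.map {D : α → α → Prop} {σ : Equiv.Perm α} (hσ : σ ∈ arcAut D) {m : ℕ}
    {p : Fin (m + 1) → α} (hp : IsArcSeq D m p) : IsArcSeq D m fun i => σ (p i) :=
  fun i => (hσ _ _).mpr (hp i)

end ArcAutomorphisms

lemma zmod_two_eq_zero_or_one : ∀ z : ZMod 2, z = 0 ∨ z = 1 := by decide

section DoubleDigraph

variable {B : W → W → Prop}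

lemma pairHom_mem_arcAut {x y : Equiv.Perm W} (hx : x ∈ arcAut B) (hy : y ∈ arcAut B) :
    pairHom (x, y) ∈ arcAut (doubleArc B) := by
  intro u v
  simp only [doubleArc, pairHom_apply, x.apply_eq_iff_eq, y.apply_eq_iff_eq, hx _ _, hy _ _]

lemma tPerm_mem_arcAut {g : Equiv.Perm W} (hg : g ∈ arcAut B) :
    tPerm g ∈ arcAut (doubleArc B) := by
  intro u v
  have h0 : ∀ z : ZMod 2, z + 1 = 0 ↔ z = 1 := by decide
  have h1 : ∀ z : ZMod 2, z + 1 = 1 ↔ z = 0 := by decide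
  simp only [doubleArc, tPerm_apply, g.apply_eq_iff_eq, hg _ _, h0, h1]
  tauto

lemma doubleGroup_le_arcAut {X : Subgroup (Equiv.Perm W)} {g : Equiv.Perm W}
    (hX : X ≤ arcAut B) (hg : g ∈ X) : doubleGroup X g ≤ arcAut (doubleArc B) := by
  refine sup_le ?_ ((Subgroup.closure_le _).mpr
    (Set.singleton_subset_iff.mpr (tPerm_mem_arcAut (hX hg))))
  rintro _ ⟨⟨x, y⟩, ⟨hx, hy⟩, rfl⟩
  exact pairHom_mem_arcAut (hX hx) (hX hy)

lemma isDigraph_doubleArc (hB : IsDigraph B) : IsDigraph (doubleArc B) := by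
  rintro u v (⟨-, hv, hfst, -⟩ | ⟨hu, -, -, hsnd⟩) (⟨hv', -, -, hvu⟩ | ⟨-, hu', hvu, -⟩)
  · exact zero_ne_one (hv'.symm.trans hv)
  · rw [hfst] at hvu
    exact hB _ _ hvu hvu
  · rw [hsnd] at hvu
    exact hB _ _ hvu hvu
  · exact zero_ne_one (hu'.symm.trans hu)


section ArcSequences

lemma IsArcSeq.arc {α : Type*} {D : α → α → Prop} {m : ℕ} {p : Fin (m + 1) → α}
    (hp : IsArcSeq D m p) {k : ℕ} (hk : k < m) : D (p ⟨k, by omega⟩) (p ⟨k + 1, by omega⟩) :=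
  hp ⟨k, hk⟩

lemma doubleArc_layer {u v : W × W × ZMod 2} (h : doubleArc B u v) : v.2.2 = u.2.2 + 1 := by
  rcases h with ⟨hu, hv, -⟩ | ⟨hu, hv, -⟩ <;> rw [hu, hv] <;> decide

lemma doubleArc_of_layer_zero {u v : W × W × ZMod 2} (h : doubleArc B u v) (hu : u.2.2 = 0) :
    v.1 = u.1 ∧ B u.2.1 v.2.1 := by
  rcases h with ⟨-, -, hfst, hsnd⟩ | ⟨hu', -⟩
  · exact ⟨hfst, hsnd⟩
  · exact absurd (hu.symm.trans hu') zero_ne_one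

lemma doubleArc_of_layer_one {u v : W × W × ZMod 2} (h : doubleArc B u v) (hu : u.2.2 = 1) :
    B u.1 v.1 ∧ u.2.1 = v.2.1 := by
  rcases h with ⟨hu', -⟩ | ⟨-, -, hfst, hsnd⟩
  · exact absurd (hu'.symm.trans hu) zero_ne_one
  · exact ⟨hfst, hsnd⟩

lemma IsArcSeq.layer {m : ℕ} {p : Fin (m + 1) → W × W × ZMod 2} (hp : IsArcSeq (doubleArc B) m p) :
    ∀ (i : ℕ) (hi : i < m + 1), (p ⟨i, hi⟩).2.2 = (p 0).2.2 + i
  | 0, _ => by simp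
  | i + 1, hi => by
    rw [doubleArc_layer (hp.arc (k := i) (by omega)), hp.layer i (by omega)]
    push_cast
    ring

variable {s : ℕ} {p : Fin (2 * s + 1) → W × W × ZMod 2}

/-- Two consecutive arcs `(v, w, 0) → (v, w', 1) → (v', w', 0)` of `Γ`. -/
lemma IsArcSeq.double_step (hp : IsArcSeq (doubleArc B) (2 * s) p) (hp0 : (p 0).2.2 = 0)
    {j : ℕ} (hj : j < s) :
    (p ⟨2 * j + 1, by omega⟩).1 = (p ⟨2 * j, by omega⟩).1 ∧
      B (p ⟨2 * j, by omega⟩).2.1 (p ⟨2 * j + 1, by omega⟩).2.1 ∧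
      B (p ⟨2 * j + 1, by omega⟩).1 (p ⟨2 * j + 2, by omega⟩).1 ∧
      (p ⟨2 * j + 1, by omega⟩).2.1 = (p ⟨2 * j + 2, by omega⟩).2.1 := by
  have h0 := doubleArc_of_layer_zero (hp.arc (k := 2 * j) (by omega))
    (by rw [hp.layer, hp0, zero_add]; exact ZMod.natCast_eq_zero_iff_even.mpr (even_two_mul j))
  have h1 := doubleArc_of_layer_one (hp.arc (k := 2 * j + 1) (by omega))
    (by rw [hp.layer, hp0, zero_add]; exact ZMod.natCast_eq_one_iff_odd.mpr (odd_two_mul_add_one j))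
  exact ⟨h0.1, h0.2, h1.1, h1.2⟩

lemma IsArcSeq.eq_zigzag (hp : IsArcSeq (doubleArc B) (2 * s) p) (hp0 : (p 0).2.2 = 0)
    (i : ℕ) (hi : i < 2 * s + 1) :
    p ⟨i, hi⟩ =
      ((p ⟨2 * (i / 2), by omega⟩).1, (p ⟨2 * ((i + 1) / 2), by omega⟩).2.1, (i : ZMod 2)) := by
  have hlayer : (p ⟨i, hi⟩).2.2 = i := by rw [hp.layer, hp0, zero_add]
  obtain ⟨j, rfl | rfl⟩ := Nat.even_or_odd' i
  · have e1 : 2 * (2 * j / 2) = 2 * j := by omega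
    have e2 : 2 * ((2 * j + 1) / 2) = 2 * j := by omega
    simp only [e1, e2, ← hlayer]
  · have e1 : 2 * ((2 * j + 1) / 2) = 2 * j := by omega
    have e2 : 2 * ((2 * j + 1 + 1) / 2) = 2 * j + 2 := by omega
    obtain ⟨hfst, -, -, hsnd⟩ := hp.double_step hp0 (j := j) (by omega)
    simp only [e1, e2, ← hlayer, ← hfst, ← hsnd]

lemma IsArcSeq.isArcSeq_fst (hp : IsArcSeq (doubleArc B) (2 * s) p) (hp0 : (p 0).2.2 = 0) :
    IsArcSeq B s fun j : Fin (s + 1) => (p ⟨2 * j, by omega⟩).1 := by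
  intro j
  obtain ⟨hfst, -, hB, -⟩ := hp.double_step hp0 j.2
  rw [hfst] at hB
  exact hB

lemma IsArcSeq.isArcSeq_snd (hp : IsArcSeq (doubleArc B) (2 * s) p) (hp0 : (p 0).2.2 = 0) :
    IsArcSeq B s fun j : Fin (s + 1) => (p ⟨2 * j, by omega⟩).2.1 := by
  intro j
  obtain ⟨-, hB, -, hsnd⟩ := hp.double_step hp0 j.2
  rw [hsnd] at hB
  exact hB

end ArcSequences

lemma exists_pairHom_map_of_layer_zero {X : Subgroup (Equiv.Perm W)} {s : ℕ}
    (hat : ArcTransitive B X s) {p q : Fin (2 * s + 1) → W × W × ZMod 2}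
    (hp : IsArcSeq (doubleArc B) (2 * s) p) (hq : IsArcSeq (doubleArc B) (2 * s) q)
    (hp0 : (p 0).2.2 = 0) (hq0 : (q 0).2.2 = 0) :
    ∃ h ∈ doubleGroupPlus X, ∀ i, h (p i) = q i := by
  obtain ⟨x, hx, hxpq⟩ := hat _ _ (hp.isArcSeq_fst hp0) (hq.isArcSeq_fst hq0)
  obtain ⟨y, hy, hypq⟩ := hat _ _ (hp.isArcSeq_snd hp0) (hq.isArcSeq_snd hq0)
  refine ⟨pairHom (x, y), pairHom_mem_map_prod.mpr ⟨hx, hy⟩, fun ⟨i, hi⟩ => ?_⟩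
  rw [hp.eq_zigzag hp0, hq.eq_zigzag hq0, pairHom_apply]
  exact Prod.ext (hxpq ⟨i / 2, by omega⟩) (Prod.ext (hypq ⟨(i + 1) / 2, by omega⟩) rfl)

lemma arcTransitive_doubleArc {X : Subgroup (Equiv.Perm W)} {g : Equiv.Perm W} {s : ℕ}
    (hX : X ≤ arcAut B) (hat : ArcTransitive B X s) (hg : g ∈ X) :
    ArcTransitive (doubleArc B) (doubleGroup X g) (2 * s) := by
  have toLayerZero : ∀ u : W × W × ZMod 2, ∃ h ∈ doubleGroup X g, (h u).2.2 = 0 := fun u => by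
    rcases zmod_two_eq_zero_or_one u.2.2 with hu | hu
    · exact ⟨1, Subgroup.one_mem _, hu⟩
    · exact ⟨tPerm g, tPerm_mem_doubleGroup, by rw [tPerm_apply, hu]; rfl⟩
  intro p q hp hq
  obtain ⟨a, ha, hpa⟩ := toLayerZero (p 0)
  obtain ⟨b, hb, hqb⟩ := toLayerZero (q 0)
  have hG := doubleGroup_le_arcAut hX hg
  obtain ⟨h, hh, hmap⟩ :=
    exists_pairHom_map_of_layer_zero hat (hp.map (hG ha)) (hq.map (hG hb)) hpa hqb
  refine ⟨b⁻¹ * h * a, Subgroup.mul_mem _ (Subgroup.mul_mem _ (Subgroup.inv_mem _ hb)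
    (le_sup_left (a := doubleGroupPlus X) hh)) ha, fun i => ?_⟩
  simp [Equiv.Perm.mul_apply, hmap i]


section Alternating

variable {α : Type*}

inductive AltRel (D : α → α → Prop) : α → α → Prop
  | refl (u : α) : AltRel D u u
  | symm {u v : α} : AltRel D u v → AltRel D v u
  | trans {u v w : α} : AltRel D u v → AltRel D v w → AltRel D u w
  | step {z z' u v : α} : AltRel D z z' → D z u → D z' v → AltRel D u v

def altSetoid (D : α → α → Prop) : Setoid α := ⟨AltRel D, ⟨.refl, .symm, .trans⟩⟩

variable {D : α → α → Prop}

lemma AltRel.map {σ : Equiv.Perm α} (hσ : σ ∈ arcAut D) {u v : α} (h : AltRel D u v) :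
    AltRel D (σ u) (σ v) := by
  induction h with
  | refl u => exact .refl _
  | symm _ ih => exact ih.symm
  | trans _ _ ih₁ ih₂ => exact ih₁.trans ih₂
  | step _ hz hz' ih => exact .step ih ((hσ _ _).mpr hz) ((hσ _ _).mpr hz')

def altAction (D : α → α → Prop) : arcAut D →* Equiv.Perm (Quotient (altSetoid D)) where
  toFun σ := Quotient.congr σ.1 fun _ _ =>
    ⟨AltRel.map σ.2, fun h => by
      have h' := AltRel.map (inv_mem σ.2) h
      rwa [← Equiv.Perm.mul_apply, ← Equiv.Perm.mul_apply, inv_mul_cancel] at h'⟩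
  map_one' := Equiv.ext <| Quotient.ind fun _ => rfl
  map_mul' _ _ := Equiv.ext <| Quotient.ind fun _ => rfl

lemma altAction_mk (σ : arcAut D) (u : α) :
    altAction D σ (Quotient.mk _ u) = Quotient.mk _ ((σ : Equiv.Perm α) u) := rfl

lemma exists_perm_altQuotient [Finite α] (hout : ∀ u, ∃ v, D u v) (hin : ∀ v, ∃ u, D u v) :
    ∃ e : Equiv.Perm (Quotient (altSetoid D)),
      ∀ u v, D u v → e (Quotient.mk _ u) = Quotient.mk _ v := by
  choose f hf using hout
  let F : Quotient (altSetoid D) → Quotient (altSetoid D) :=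
    Quotient.map f fun u u' h => AltRel.step h (hf u) (hf u')
  have hF : ∀ u v, D u v → F (Quotient.mk _ u) = Quotient.mk _ v :=
    fun u v h => Quotient.sound (AltRel.step (.refl u) (hf u) h)
  have hsurj : Function.Surjective F := Quotient.ind fun v =>
    let ⟨u, hu⟩ := hin v
    ⟨_, hF u v hu⟩
  exact ⟨.ofBijective F ⟨Finite.injective_iff_surjective.mpr hsurj, hsurj⟩, hF⟩

lemma sameCycle_of_connected (hD : Connected D) {e : Equiv.Perm (Quotient (altSetoid D))}
    (he : ∀ u v, D u v → e (Quotient.mk _ u) = Quotient.mk _ v) (u v : α) :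
    e.SameCycle (Quotient.mk _ u) (Quotient.mk _ v) := by
  induction hD u v with
  | refl => exact .refl _ _
  | tail _ hbc ih =>
    rcases hbc with h | h
    · rw [← he _ _ h]
      exact Equiv.Perm.sameCycle_apply_right.mpr ih
    · rw [← he _ _ h] at ih
      exact Equiv.Perm.sameCycle_apply_right.mp ih

-- On each `e`-cycle both `σ` and `τ` act as powers of `e`.
lemma commute_of_forall_sameCycle {β : Type*} {e σ τ : Equiv.Perm β} (hσ : Commute σ e)
    (hτ : Commute τ e) (hσe : ∀ c, e.SameCycle c (σ c)) (hτe : ∀ c, e.SameCycle c (τ c)) :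
    Commute σ τ := by
  have hpow : ∀ {π : Equiv.Perm β}, Commute π e →
      ∀ (k : ℤ) (d : β), π ((e ^ k) d) = (e ^ k) (π d) :=
    fun hπ k d => Equiv.Perm.ext_iff.mp (hπ.zpow_right k).eq d
  refine Equiv.ext fun c => ?_
  obtain ⟨i, hi⟩ := hσe c
  obtain ⟨j, hj⟩ := hτe c
  calc σ (τ c) = (e ^ j) ((e ^ i) c) := by rw [← hj, hpow hσ, hi]
    _ = (e ^ i) ((e ^ j) c) := by
      rw [← Equiv.Perm.mul_apply, ← zpow_add, add_comm, zpow_add, Equiv.Perm.mul_apply]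
    _ = τ (σ c) := by rw [← hi, hpow hτ, hj]

lemma altRel_commutator [Finite α] (hD : Connected D) (hout : ∀ u, ∃ v, D u v)
    (hin : ∀ v, ∃ u, D u v) {x y : Equiv.Perm α} (hx : x ∈ arcAut D) (hy : y ∈ arcAut D)
    (w : α) : AltRel D ((x * y * x⁻¹ * y⁻¹) w) w := by
  obtain ⟨e, he⟩ := exists_perm_altQuotient hout hin
  have hcomm : ∀ σ : arcAut D, Commute (altAction D σ) e := fun σ =>
    Equiv.ext <| Quotient.ind fun u => by
      obtain ⟨v, hv⟩ := hout u
      show altAction D σ (e (Quotient.mk _ u)) = e (altAction D σ (Quotient.mk _ u))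
      rw [he u v hv, altAction_mk, altAction_mk, he _ _ ((σ.2 u v).mpr hv)]
  have hcyc : ∀ σ : arcAut D, ∀ c, e.SameCycle c (altAction D σ c) := fun σ =>
    Quotient.ind fun u => sameCycle_of_connected hD he u ((σ : Equiv.Perm α) u)
  have hxy := commute_of_forall_sameCycle (hcomm ⟨x, hx⟩) (hcomm ⟨y, hy⟩) (hcyc _) (hcyc _)
  have h1 : altAction D (⟨x, hx⟩ * ⟨y, hy⟩ * ⟨x, hx⟩⁻¹ * ⟨y, hy⟩⁻¹) = 1 := by
    rw [map_mul, map_mul, map_mul, map_inv, map_inv, hxy.eq]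
    group
  exact Quotient.exact (Equiv.ext_iff.mp h1 (Quotient.mk _ w))

/-- The kernel of `X` on the `AltRel`-classes is normal in `X` and contains every commutator
(`altRel_commutator`), so quasiprimitivity makes it transitive. -/
lemma altRel_total [Finite α] (hD : Connected D) (hout : ∀ u, ∃ v, D u v)
    (hin : ∀ v, ∃ u, D u v) {X : Subgroup (Equiv.Perm α)} (hX : X ≤ arcAut D)
    (hqp : ∀ L : Subgroup (Equiv.Perm α), NormalIn L X → L ≠ ⊥ → ∀ u v : α, ∃ x ∈ L, x u = v)
    (hnonab : ¬ ∀ a ∈ X, ∀ b ∈ X, a * b = b * a) (u v : α) : AltRel D u v := by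
  let K : Subgroup (Equiv.Perm α) :=
    { carrier := {x | x ∈ X ∧ ∀ w, AltRel D (x w) w}
      one_mem' := ⟨X.one_mem, .refl⟩
      mul_mem' := fun ⟨hx, hxw⟩ ⟨hy, hyw⟩ => ⟨X.mul_mem hx hy, fun w => (hxw _).trans (hyw w)⟩
      inv_mem' := fun {x} ⟨hx, hxw⟩ =>
        ⟨X.inv_mem hx, fun w => by simpa using (hxw (x⁻¹ w)).symm⟩ }
  have hK : NormalIn K X := ⟨fun _ hx => hx.1, fun y hy x ⟨hx, hxw⟩ =>
    ⟨X.mul_mem (X.mul_mem hy hx) (X.inv_mem hy),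
      fun w => by simpa using (hxw (y⁻¹ w)).map (hX hy)⟩⟩
  simp only [not_forall] at hnonab
  obtain ⟨x, hx, y, hy, hxy⟩ := hnonab
  have hK1 : K ≠ ⊥ := ne_bot_of_mem_of_ne_one (x := x * y * x⁻¹ * y⁻¹)
    ⟨X.mul_mem (X.mul_mem (X.mul_mem hx hy) (X.inv_mem hx)) (X.inv_mem hy),
      altRel_commutator hD hout hin (hX hx) (hX hy)⟩
    fun h => hxy (by rwa [mul_inv_eq_one, mul_inv_eq_iff_eq_mul] at h)
  obtain ⟨z, ⟨-, hz⟩, rfl⟩ := hqp K hK hK1 v u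
  exact hz v

end Alternating

lemma AltRel.eqvGen_doubleArc_fst (hin : ∀ v, ∃ u, B u v) {u v : W} (h : AltRel B u v) (b : W) :
    Relation.EqvGen (doubleArc B) (u, b, 0) (v, b, 0) := by
  have eqv := Relation.EqvGen.is_equivalence (doubleArc B)
  induction h generalizing b with
  | refl => exact eqv.refl _
  | symm _ ih => exact eqv.symm (ih b)
  | trans _ _ ih₁ ih₂ => exact eqv.trans (ih₁ b) (ih₂ b)
  | @step z z' u v _ hz hz' ih =>
    obtain ⟨b', hb'⟩ := hin b
    -- `(u, b, 0) ← (z, b, 1) ← (z, b', 0) ~ (z', b', 0) → (z', b, 1) → (v, b, 0)`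
    have e₁ : doubleArc B (z, b, 1) (u, b, 0) := Or.inr ⟨rfl, rfl, hz, rfl⟩
    have e₂ : doubleArc B (z, b', 0) (z, b, 1) := Or.inl ⟨rfl, rfl, rfl, hb'⟩
    have e₃ : doubleArc B (z', b', 0) (z', b, 1) := Or.inl ⟨rfl, rfl, rfl, hb'⟩
    have e₄ : doubleArc B (z', b, 1) (v, b, 0) := Or.inr ⟨rfl, rfl, hz', rfl⟩
    exact eqv.trans (eqv.symm (eqv.trans (.rel _ _ e₂) (.rel _ _ e₁)))
      (eqv.trans (ih b') (eqv.trans (.rel _ _ e₃) (.rel _ _ e₄)))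

lemma AltRel.eqvGen_doubleArc_snd (hout : ∀ u, ∃ v, B u v) {u v : W} (h : AltRel (flip B) u v)
    (a : W) : Relation.EqvGen (doubleArc B) (a, u, 0) (a, v, 0) := by
  have eqv := Relation.EqvGen.is_equivalence (doubleArc B)
  induction h generalizing a with
  | refl => exact eqv.refl _
  | symm _ ih => exact eqv.symm (ih a)
  | trans _ _ ih₁ ih₂ => exact eqv.trans (ih₁ a) (ih₂ a)
  | @step z z' u v _ hz hz' ih =>
    obtain ⟨a', ha'⟩ := hout a
    -- `(a, u, 0) → (a, z, 1) → (a', z, 0) ~ (a', z', 0) ← (a, z', 1) ← (a, v, 0)`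
    have e₁ : doubleArc B (a, u, 0) (a, z, 1) := Or.inl ⟨rfl, rfl, rfl, hz⟩
    have e₂ : doubleArc B (a, z, 1) (a', z, 0) := Or.inr ⟨rfl, rfl, ha', rfl⟩
    have e₃ : doubleArc B (a, z', 1) (a', z', 0) := Or.inr ⟨rfl, rfl, ha', rfl⟩
    have e₄ : doubleArc B (a, v, 0) (a, z', 1) := Or.inl ⟨rfl, rfl, rfl, hz'⟩
    exact eqv.trans (eqv.trans (.rel _ _ e₁) (.rel _ _ e₂))
      (eqv.trans (ih a') (eqv.symm (eqv.trans (.rel _ _ e₄) (.rel _ _ e₃))))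

lemma connected_doubleArc [Finite W] {X : Subgroup (Equiv.Perm W)} (hB : Connected B)
    (hout : ∀ u, ∃ v, B u v) (hin : ∀ v, ∃ u, B u v) (hX : X ≤ arcAut B)
    (hqp : ∀ L : Subgroup (Equiv.Perm W), NormalIn L X → L ≠ ⊥ → ∀ u v : W, ∃ x ∈ L, x u = v)
    (hnonab : ¬ ∀ a ∈ X, ∀ b ∈ X, a * b = b * a) : Connected (doubleArc B) := by
  have hfst := altRel_total hB hout hin hX hqp hnonab
  have hsnd := altRel_total (D := flip B)
    (fun u v => Relation.ReflTransGen.mono (fun _ _ => Or.symm) _ _ (hB u v)) hin hout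
    ((arcAut_flip B).symm ▸ hX) hqp hnonab
  have eqv := Relation.EqvGen.is_equivalence (doubleArc B)
  have toLayerZero : ∀ p : W × W × ZMod 2, ∃ b, Relation.EqvGen (doubleArc B) p (p.1, b, 0) := by
    rintro ⟨a, b, δ⟩
    rcases zmod_two_eq_zero_or_one δ with rfl | rfl
    · exact ⟨b, eqv.refl _⟩
    · obtain ⟨b', hb'⟩ := hin b
      exact ⟨b', eqv.symm (.rel _ _ (Or.inl ⟨rfl, rfl, rfl, hb'⟩))⟩
  refine connected_iff_eqvGen.mpr fun p q => ?_
  obtain ⟨b, hp⟩ := toLayerZero p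
  obtain ⟨b', hq⟩ := toLayerZero q
  exact eqv.trans hp (eqv.trans ((hfst p.1 q.1).eqvGen_doubleArc_fst hin b)
    (eqv.trans ((hsnd b b').eqvGen_doubleArc_snd hout q.1) (eqv.symm hq)))

end DoubleDigraph

theorem doubling_biquasiprimitive_general
    [Finite W] (B : W → W → Prop) (X : Subgroup (Equiv.Perm W)) (s k : ℕ)
    (v₀ : W) (g : Equiv.Perm W)
    (hdig : IsDigraph B) (hk : 2 ≤ k) (hval : Valency B k)
    (hAut : PreservesArcs B X)
    (hat : ArcTransitive B X s)
    (hg : g ∈ X)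
    -- Δ is connected and not bipartite
    (hconn : Connected B)
    -- X has a unique minimal normal subgroup N₀, and N₀ is nonabelian
    (N₀ : Subgroup (Equiv.Perm W)) (hmin : MinimalNormalIn N₀ X)
    (huniq : ∀ L : Subgroup (Equiv.Perm W), MinimalNormalIn L X → L = N₀)
    (hnonab : ¬ ∀ a ∈ N₀, ∀ b ∈ N₀, a * b = b * a) :
    -- G has a unique minimal normal subgroup, namely L = N₀ × N₀ ≤ X × X
    (MinimalNormalIn (Subgroup.map pairHom (N₀.prod N₀)) (doubleGroup X g) ∧
      ∀ L' : Subgroup (Equiv.Perm (W × W × ZMod 2)),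
        MinimalNormalIn L' (doubleGroup X g) →
        L' = Subgroup.map pairHom (N₀.prod N₀)) ∧
    -- if moreover X is quasiprimitive on VΔ, then G is bi-quasiprimitive on VΓ and
    -- Γ is a connected (G,2s)-arc-transitive digraph
    ((∀ L : Subgroup (Equiv.Perm W), NormalIn L X → L ≠ ⊥ →
        ∀ u v : W, ∃ x ∈ L, x u = v) →
      (BiQuasiprimitive (doubleGroup X g) ∧
        Connected (doubleArc B) ∧ IsDigraph (doubleArc B) ∧
        ArcTransitive (doubleArc B) (doubleGroup X g) (2 * s))) := by
  have hX := hAut.le_arcAut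
  have hLmin := minimalNormalIn_socle hg hmin hnonab
  have hLuniq : ∀ M, MinimalNormalIn M (doubleGroup X g) → M = _ :=
    fun M => hLmin.eq_of_inf_centralizer_eq_bot
      (doubleGroup_inf_centralizer_socle hg hmin.2.1 (inf_centralizer_eq_bot hmin huniq hnonab))
  refine ⟨⟨hLmin, hLuniq⟩, fun hqp =>
    ⟨?_, ?_, isDigraph_doubleArc hdig, arcTransitive_doubleArc hX hat hg⟩⟩
  · have : Nonempty W := ⟨v₀⟩
    exact biQuasiprimitive_of_forall_minimalNormalIn_eq hLmin.1 hLuniq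
      (card_orbitRel_socle (hqp N₀ hmin.1 hmin.2.1))
  · have harcs := hval.exists_arc (by omega)
    exact connected_doubleArc hconn (fun u => (harcs u).1) (fun v => (harcs v).2) hX hqp
      fun h => hnonab fun a ha b hb => h a (hmin.1.1 ha) b (hmin.1.1 hb)

theorem doubling_biquasiprimitive
    [Finite W] (B : W → W → Prop) (X : Subgroup (Equiv.Perm W)) (s k : ℕ)
    (v₀ v₁ : W) (g : Equiv.Perm W)
    (hdig : IsDigraph B) (hk : 2 ≤ k) (hval : Valency B k)
    (hAut : PreservesArcs B X) (hvt : VertexTransitive X)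
    (hs : 2 ≤ s) (hat : ArcTransitive B X s)
    (harc : B v₀ v₁) (hg : g ∈ X) (hgv : g v₀ = v₁)
    -- Δ is connected and not bipartite
    (hconn : Connected B) (hnotbip : ¬ Bipartite B)
    -- X has a unique minimal normal subgroup N₀, and N₀ is nonabelian
    (N₀ : Subgroup (Equiv.Perm W)) (hmin : MinimalNormalIn N₀ X)
    (huniq : ∀ L : Subgroup (Equiv.Perm W), MinimalNormalIn L X → L = N₀)
    (hnonab : ¬ ∀ a ∈ N₀, ∀ b ∈ N₀, a * b = b * a) :
    -- G has a unique minimal normal subgroup, namely L = N₀ × N₀ ≤ X × X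
    (MinimalNormalIn (Subgroup.map pairHom (N₀.prod N₀)) (doubleGroup X g) ∧
      ∀ L' : Subgroup (Equiv.Perm (W × W × ZMod 2)),
        MinimalNormalIn L' (doubleGroup X g) →
        L' = Subgroup.map pairHom (N₀.prod N₀)) ∧
    -- if moreover X is quasiprimitive on VΔ, then G is bi-quasiprimitive on VΓ and
    -- Γ is a connected (G,2s)-arc-transitive digraph
    ((∀ L : Subgroup (Equiv.Perm W), NormalIn L X → L ≠ ⊥ →
        ∀ u v : W, ∃ x ∈ L, x u = v) →
      (BiQuasiprimitive (doubleGroup X g) ∧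
        Connected (doubleArc B) ∧ IsDigraph (doubleArc B) ∧
        ArcTransitive (doubleArc B) (doubleGroup X g) (2 * s))) :=
  doubling_biquasiprimitive_general B X s k v₀ g hdig hk hval hAut hat hg hconn N₀ hmin huniq hnonab

end Doubling
end

section
/- With the notation of the doubling construction: if Γ is (G,5)-arc-transitive, then Δ is (X,3)-arc-transitive. -/
namespace Doubling

variable {W : Type*}

/-!
An `(s+1)`-arc `p₀ → p₁ → ⋯ → p_{s+1}` of `Δ` lifts to the zigzag `(2s+1)`-arc
`(p₀,p₀,0) → (p₀,p₁,1) → (p₁,p₁,0) → (p₁,p₂,1) → ⋯ → (p_s,p_{s+1},1)` of `Γ`, whose second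
coordinates run through all of `p`. Both `G⁺` and `t` lie in the wreath product `X ≀ Z₂`, whose
elements either act as `(x,y) ∈ X × X` or interchange the two levels. An element of `G` carrying
the lift of `p` to the lift of `q` fixes the level of the first vertex, so it is some `(x,y)`,
and then `y` carries `p` to `q`.
-/

@[simp]
lemma pairPerm_apply (x y : Equiv.Perm W) (u : W × W × ZMod 2) :
    pairPerm x y u = (x u.1, y u.2.1, u.2.2) :=
  rfl

@[simp]
lemma tauPerm_apply (u : W × W × ZMod 2) : tauPerm u = (u.2.1, u.1, u.2.2 + 1) :=
  rfl

def wreathSubgroup (X : Subgroup (Equiv.Perm W)) : Subgroup (Equiv.Perm (W × W × ZMod 2)) where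
  carrier := {γ | ∃ x ∈ X, ∃ y ∈ X, γ = pairPerm x y ∨ γ = tauPerm * pairPerm x y}
  one_mem' := ⟨1, X.one_mem, 1, X.one_mem, Or.inl (by ext u <;> rfl)⟩
  mul_mem' := by
    rintro _ _ ⟨x, hx, y, hy, rfl | rfl⟩ ⟨x', hx', y', hy', rfl | rfl⟩
    · exact ⟨x * x', X.mul_mem hx hx', y * y', X.mul_mem hy hy', Or.inl (by ext u <;> rfl)⟩
    · exact ⟨y * x', X.mul_mem hy hx', x * y', X.mul_mem hx hy', Or.inr (by ext u <;> rfl)⟩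
    · exact ⟨x * x', X.mul_mem hx hx', y * y', X.mul_mem hy hy', Or.inr (by ext u <;> rfl)⟩
    · refine ⟨y * x', X.mul_mem hy hx', x * y', X.mul_mem hx hy', Or.inl ?_⟩
      ext u <;> simp [CharTwo.add_cancel_right]
  inv_mem' := by
    rintro _ ⟨x, hx, y, hy, rfl | rfl⟩
    · refine ⟨x⁻¹, X.inv_mem hx, y⁻¹, X.inv_mem hy, Or.inl ?_⟩
      rw [inv_eq_iff_mul_eq_one]
      ext u <;> simp
    · refine ⟨y⁻¹, X.inv_mem hy, x⁻¹, X.inv_mem hx, Or.inr ?_⟩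
      rw [inv_eq_iff_mul_eq_one]
      ext u <;> simp [CharTwo.add_cancel_right]

lemma doubleGroup_le_wreathSubgroup {X : Subgroup (Equiv.Perm W)} {g : Equiv.Perm W}
    (hg : g ∈ X) : doubleGroup X g ≤ wreathSubgroup X := by
  refine sup_le ?_ ((Subgroup.closure_le _).2 ?_)
  · rintro _ ⟨⟨x, y⟩, ⟨hx, hy⟩, rfl⟩
    exact ⟨x, hx, y, hy, Or.inl rfl⟩
  · rintro _ rfl
    exact ⟨g, hg, 1, X.one_mem, Or.inr rfl⟩

lemma exists_eq_pairPerm_of_mem_wreathSubgroup {X : Subgroup (Equiv.Perm W)}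
    {γ : Equiv.Perm (W × W × ZMod 2)} (hγ : γ ∈ wreathSubgroup X) {u : W × W × ZMod 2}
    (hu : (γ u).2.2 = u.2.2) : ∃ x ∈ X, ∃ y ∈ X, γ = pairPerm x y := by
  obtain ⟨x, hx, y, hy, rfl | rfl⟩ := hγ
  · exact ⟨x, hx, y, hy, rfl⟩
  · simp at hu

def zigzagLift {s : ℕ} (p : Fin (s + 2) → W) (j : Fin (2 * s + 2)) : W × W × ZMod 2 :=
  (p ⟨j / 2, by omega⟩, p ⟨(j + 1) / 2, by omega⟩, ((j : ℕ) : ZMod 2))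

lemma isArcSeq_zigzagLift {B : W → W → Prop} {s : ℕ} {p : Fin (s + 2) → W}
    (hp : IsArcSeq B (s + 1) p) : IsArcSeq (doubleArc B) (2 * s + 1) (zigzagLift p) := by
  intro i
  have hB (m : ℕ) (hm : m < s + 1) : B (p ⟨m, by omega⟩) (p ⟨m + 1, by omega⟩) := hp ⟨m, hm⟩
  obtain ⟨m, hi | hi⟩ := Nat.even_or_odd' (i : ℕ)
  · refine Or.inl ⟨?_, ?_, ?_, ?_⟩
    · simp [zigzagLift, hi, CharTwo.two_eq_zero]
    · simp [zigzagLift, hi, CharTwo.two_eq_zero]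
    · simp only [zigzagLift, Fin.val_succ, Fin.val_castSucc, hi]
      congr 2
      omega
    · simp only [zigzagLift, Fin.val_succ, Fin.val_castSucc, hi]
      convert hB m (by omega) using 3 <;> omega
  · refine Or.inr ⟨?_, ?_, ?_, ?_⟩
    · simp [zigzagLift, hi, CharTwo.two_eq_zero]
    · simp [zigzagLift, hi, CharTwo.two_eq_zero, CharTwo.add_self_eq_zero]
    · simp only [zigzagLift, Fin.val_succ, Fin.val_castSucc, hi]
      convert hB m (by omega) using 3 <;> omega
    · simp only [zigzagLift, Fin.val_succ, Fin.val_castSucc, hi]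
      congr 2
      omega

-- For `i = 0` the position `2 * i - 1` is `0`, by truncated subtraction.
lemma zigzagLift_two_mul_sub_one_snd_fst {s : ℕ} (p : Fin (s + 2) → W) (i : Fin (s + 2)) :
    (zigzagLift p ⟨2 * i - 1, by omega⟩).2.1 = p i := by
  simp only [zigzagLift]
  congr 2
  omega

theorem arcTransitive_of_arcTransitive_doubleArc {B : W → W → Prop}
    {X : Subgroup (Equiv.Perm W)} {g : Equiv.Perm W} (hg : g ∈ X) {s : ℕ}
    (h : ArcTransitive (doubleArc B) (doubleGroup X g) (2 * s + 1)) :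
    ArcTransitive B X (s + 1) := by
  intro p q hp hq
  obtain ⟨γ, hγ, hγpq⟩ := h _ _ (isArcSeq_zigzagLift hp) (isArcSeq_zigzagLift hq)
  have hlevel : (γ (zigzagLift p 0)).2.2 = (zigzagLift p 0).2.2 := by rw [hγpq 0]; rfl
  obtain ⟨x, -, y, hy, rfl⟩ :=
    exists_eq_pairPerm_of_mem_wreathSubgroup (doubleGroup_le_wreathSubgroup hg hγ) hlevel
  refine ⟨y, hy, fun i => ?_⟩
  simpa [zigzagLift_two_mul_sub_one_snd_fst] using
    congrArg (fun u => u.2.1) (hγpq ⟨2 * i - 1, by omega⟩)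

theorem doubling_five_arc_transitive_input_three_general
    (B : W → W → Prop) (X : Subgroup (Equiv.Perm W))
    (g : Equiv.Perm W)
    (hg : g ∈ X)
    -- if Γ is (G,5)-arc-transitive
    (h5 : ArcTransitive (doubleArc B) (doubleGroup X g) 5) :
    -- then Δ is (X,3)-arc-transitive
    ArcTransitive B X 3 :=
  arcTransitive_of_arcTransitive_doubleArc (s := 2) hg h5

theorem doubling_five_arc_transitive_input_three
    [Finite W] (B : W → W → Prop) (X : Subgroup (Equiv.Perm W)) (s k : ℕ)
    (v₀ v₁ : W) (g : Equiv.Perm W)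
    (hdig : IsDigraph B) (hk : 2 ≤ k) (hval : Valency B k)
    (hAut : PreservesArcs B X) (hvt : VertexTransitive X)
    (hs : 2 ≤ s) (hat : ArcTransitive B X s)
    (harc : B v₀ v₁) (hg : g ∈ X) (hgv : g v₀ = v₁)
    -- if Γ is (G,5)-arc-transitive
    (h5 : ArcTransitive (doubleArc B) (doubleGroup X g) 5) :
    -- then Δ is (X,3)-arc-transitive
    ArcTransitive B X 3 :=
  doubling_five_arc_transitive_input_three_general B X g hg h5

end Doubling
end
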